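/- Under the hypotheses of the alternative theorem for sequences satisfying property (H) at $\hat{x}$, if additionally there exists $w \in E$ with $\sup_{n \geq 1} D^+ h_n(\hat{x})(w) < 0$, and if $(\alpha_\infty, \alpha_0, \alpha_1, \ldots)$ are nonnegative reals with $\alpha_\infty + \sum_n \alpha_n = 1$ satisfying $\alpha_\infty D^+ h_\infty(\hat{x})(u) + \sum_{n \geq 0} \alpha_n D^+ h_n(\hat{x})(u) \geq 0$ for all $u \in E$, then $\alpha_0 \neq 0$. -/

import Mathlib

/-!
Suppose `α 0 = 0`. Lipschitz-seminorm convergence makes the difference quotients of `h n`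
uniformly close to those of `hinf`, so `D⁺ hinf(xh)(w) ≤ D⁺ h n(xh)(w) + ε ‖w‖ ≤ c + ε ‖w‖`
for large `n`, hence `D⁺ hinf(xh)(w) ≤ c < 0`; the same estimate bounds `D⁺ h n(xh)(w)`
uniformly, so the series converges. Evaluating the multiplier inequality at `w` then gives
`0 ≤ αinf c + (∑ αₙ) c = c < 0`.
-/

open Filter Topology
open scoped NNReal

/-- Upper Dini derivative of `f` at `x` in direction `u`. -/
noncomputable def dini {E : Type*} [NormedAddCommGroup E] [NormedSpace ℝ E]
    (f : E → ℝ) (x u : E) : ℝ :=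
  Filter.limsup (fun t : ℝ => (f (x + t • u) - f x) / t) (𝓝[>] (0 : ℝ))

lemma lipschitzOnWith_toNNReal_of_abs_sub_le {E : Type*} [SeminormedAddCommGroup E]
    {f : E → ℝ} {s : Set E} {K : ℝ}
    (hf : ∀ y ∈ s, ∀ z ∈ s, |f y - f z| ≤ K * ‖y - z‖) : LipschitzOnWith K.toNNReal f s :=
  LipschitzOnWith.of_dist_le_mul fun y hy z hz => by
    rw [Real.dist_eq, dist_eq_norm]
    exact (hf y hy z hz).trans
      (mul_le_mul_of_nonneg_right (Real.le_coe_toNNReal K) (norm_nonneg _))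

section DiniDerivative

variable {E : Type*} [NormedAddCommGroup E] [NormedSpace ℝ E]

lemma eventually_add_smul_mem {s : Set E} {x : E} (hs : s ∈ 𝓝 x) (w : E) :
    ∀ᶠ t in 𝓝[>] (0 : ℝ), x + t • w ∈ s := by
  have hcont : Tendsto (fun t : ℝ => x + t • w) (𝓝 0) (𝓝 x) := by
    simpa using ((continuous_id.smul continuous_const).const_add x).tendsto (0 : ℝ)
  exact nhdsWithin_le_nhds (hcont hs)

namespace LipschitzOnWith

variable {f g : E → ℝ} {s : Set E} {x : E} {K ε : ℝ≥0}

lemma eventually_abs_slope_le (hf : LipschitzOnWith K f s) (hs : s ∈ 𝓝 x) (w : E) :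
    ∀ᶠ t in 𝓝[>] (0 : ℝ), |(f (x + t • w) - f x) / t| ≤ K * ‖w‖ := by
  filter_upwards [eventually_add_smul_mem hs w, self_mem_nhdsWithin] with t hts ht
  have ht : (0 : ℝ) < t := ht
  rw [abs_div, abs_of_pos ht, div_le_iff₀ ht, ← Real.dist_eq]
  calc dist (f (x + t • w)) (f x) ≤ K * dist (x + t • w) x :=
        hf.dist_le_mul _ hts _ (mem_of_mem_nhds hs)
    _ = K * ‖w‖ * t := by
        rw [dist_eq_norm, add_sub_cancel_left, norm_smul, Real.norm_of_nonneg ht.le]; ring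

lemma isBoundedUnder_le_slope (hf : LipschitzOnWith K f s) (hs : s ∈ 𝓝 x) (w : E) :
    IsBoundedUnder (· ≤ ·) (𝓝[>] (0 : ℝ)) fun t => (f (x + t • w) - f x) / t :=
  isBoundedUnder_of_eventually_le <|
    (hf.eventually_abs_slope_le hs w).mono fun _ ht => (abs_le.mp ht).2

lemma isCoboundedUnder_le_slope (hf : LipschitzOnWith K f s) (hs : s ∈ 𝓝 x) (w : E) :
    IsCoboundedUnder (· ≤ ·) (𝓝[>] (0 : ℝ)) fun t => (f (x + t • w) - f x) / t :=
  isCoboundedUnder_le_of_eventually_le _ <|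
    (hf.eventually_abs_slope_le hs w).mono fun _ ht => (abs_le.mp ht).1

lemma abs_dini_le (hf : LipschitzOnWith K f s) (hs : s ∈ 𝓝 x) (w : E) :
    |dini f x w| ≤ K * ‖w‖ := by
  have hslope := hf.eventually_abs_slope_le hs w
  refine abs_le.mpr ⟨?_, ?_⟩
  · exact le_limsup_of_frequently_le (hslope.mono fun _ ht => (abs_le.mp ht).1).frequently
      (hf.isBoundedUnder_le_slope hs w)
  · exact limsup_le_of_le (hf.isCoboundedUnder_le_slope hs w)
      (hslope.mono fun _ ht => (abs_le.mp ht).2)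

lemma dini_le_dini_add (hg : LipschitzOnWith K g s) (hfg : LipschitzOnWith ε (f - g) s)
    (hs : s ∈ 𝓝 x) (w : E) : dini g x w ≤ dini f x w + ε * ‖w‖ := by
  have hf : LipschitzOnWith (ε + K) f s := by simpa using hfg.add hg
  have hslope : ∀ᶠ t in 𝓝[>] (0 : ℝ),
      (g (x + t • w) - g x) / t ≤ (f (x + t • w) - f x) / t + ε * ‖w‖ := by
    filter_upwards [hfg.eventually_abs_slope_le hs w] with t ht
    have := (abs_le.mp ht).1
    rw [Pi.sub_apply, Pi.sub_apply, sub_sub_sub_comm, sub_div] at this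
    linarith
  unfold dini
  rw [← limsup_add_const _ _ _ (hf.isBoundedUnder_le_slope hs w)
    (hf.isCoboundedUnder_le_slope hs w)]
  refine limsup_le_limsup hslope (hg.isCoboundedUnder_le_slope hs w) ?_
  exact isBoundedUnder_of_eventually_le <| (hf.eventually_abs_slope_le hs w).mono
    fun _ ht => add_le_add_left (abs_le.mp ht).2 _

lemma dini_le_of_forall_approx (hg : LipschitzOnWith K g s) (hs : s ∈ 𝓝 x) (w : E) {c : ℝ}
    (happrox : ∀ ε : ℝ≥0, 0 < ε → ∃ f : E → ℝ, dini f x w ≤ c ∧ LipschitzOnWith ε (f - g) s) :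
    dini g x w ≤ c := by
  refine le_of_forall_pos_le_add fun δ hδ => ?_
  have hw : 0 < ‖w‖ + 1 := by positivity
  obtain ⟨f, hfc, hfg⟩ := happrox (δ / (‖w‖ + 1)).toNNReal (by positivity)
  calc dini g x w ≤ dini f x w + δ / (‖w‖ + 1) * ‖w‖ := by
        simpa [Real.coe_toNNReal _ (by positivity : 0 ≤ δ / (‖w‖ + 1))]
          using hg.dini_le_dini_add hfg hs w
    _ ≤ c + δ := by
        gcongr
        rw [div_mul_eq_mul_div, div_le_iff₀ hw]
        nlinarith

end LipschitzOnWith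

end DiniDerivative

lemma Summable.mul_of_eventually_abs_le {ι : Type*} {a d : ι → ℝ} (ha : Summable a) {M : ℝ}
    (hd : ∀ᶠ i in cofinite, |d i| ≤ M) : Summable fun i => a i * d i :=
  ha.abs.mul_right M |>.of_norm_bounded_eventually <| hd.mono fun i hi => by
    rw [Real.norm_eq_abs, abs_mul]
    exact mul_le_mul_of_nonneg_left hi (abs_nonneg _)

theorem stmt_14_general {E : Type*} [NormedAddCommGroup E] [NormedSpace ℝ E]
    (Ω : Set E) (hΩ : IsOpen Ω) (xh : E) (hxh : xh ∈ Ω) (r : ℝ) (hr : 0 < r)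
    (h : ℕ → E → ℝ) (hinf : E → ℝ)
    (hlipinf : ∃ K : ℝ, ∀ y ∈ Metric.ball xh r ∩ Ω, ∀ z ∈ Metric.ball xh r ∩ Ω,
      |hinf y - hinf z| ≤ K * ‖y - z‖)
    (hsem : ∀ ε > 0, ∃ N : ℕ, ∀ n ≥ N,
      ∀ y ∈ Metric.ball xh r ∩ Ω, ∀ z ∈ Metric.ball xh r ∩ Ω,
        |(h n y - hinf y) - (h n z - hinf z)| ≤ ε * ‖y - z‖)
    -- there exists `w` with `sup_{n ≥ 1} D⁺ h n (xh)(w) < 0`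
    (w : E) (hw : ∃ c < (0 : ℝ), ∀ n ≥ 1, dini (h n) xh w ≤ c)
    -- the multipliers
    (αinf : ℝ) (α : ℕ → ℝ) (hαinf : 0 ≤ αinf) (hα : ∀ n, 0 ≤ α n)
    (hαsum : Summable α) (hone : αinf + ∑' n, α n = 1)
    (hineq : ∀ u : E, 0 ≤ αinf * dini hinf xh u + ∑' n, α n * dini (h n) xh u) :
    α 0 ≠ 0 := by
  obtain ⟨c, hc0, hc⟩ := hw
  set s := Metric.ball xh r ∩ Ω
  have hs : s ∈ 𝓝 xh := Filter.inter_mem (Metric.ball_mem_nhds xh hr) (hΩ.mem_nhds hxh)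
  obtain ⟨K, hK⟩ := hlipinf
  have hinfL := lipschitzOnWith_toNNReal_of_abs_sub_le hK
  have happrox : ∀ ε : ℝ≥0, 0 < ε → ∃ N, ∀ n ≥ N, LipschitzOnWith ε (h n - hinf) s := by
    intro ε hε
    obtain ⟨N, hN⟩ := hsem ε hε
    exact ⟨N, fun n hn => by
      simpa using lipschitzOnWith_toNNReal_of_abs_sub_le (f := h n - hinf) (hN n hn)⟩
  have hdinf : dini hinf xh w ≤ c := hinfL.dini_le_of_forall_approx hs w fun ε hε => by
    obtain ⟨N, hN⟩ := happrox ε hε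
    exact ⟨h (max N 1), hc _ (le_max_right _ _), hN _ (le_max_left _ _)⟩
  have hsummable : Summable fun n => α n * dini (h n) xh w := by
    obtain ⟨N, hN⟩ := happrox 1 one_pos
    refine hαsum.mul_of_eventually_abs_le (M := ↑(1 + K.toNNReal) * ‖w‖) ?_
    rw [Nat.cofinite_eq_atTop, eventually_atTop]
    exact ⟨N, fun n hn => by simpa using ((hN n hn).add hinfL).abs_dini_le hs w⟩
  intro hα0
  have hsum_le : ∑' n, α n * dini (h n) xh w ≤ (∑' n, α n) * c := by
    rw [← tsum_mul_right]
    refine hsummable.tsum_le_tsum (fun n => ?_) (hαsum.mul_right c)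
    rcases Nat.eq_zero_or_pos n with rfl | hn
    · simp [hα0]
    · exact mul_le_mul_of_nonneg_left (hc n hn) (hα n)
  have hinf_le : αinf * dini hinf xh w ≤ αinf * c := mul_le_mul_of_nonneg_left hdinf hαinf
  have hweights : αinf * c + (∑' n, α n) * c = c := by rw [← add_mul, hone, one_mul]
  linarith [hineq w]

theorem stmt_14 {E : Type*} [NormedAddCommGroup E] [NormedSpace ℝ E]
    (Ω : Set E) (hΩ : IsOpen Ω) (xh : E) (hxh : xh ∈ Ω) (r : ℝ) (hr : 0 < r)
    (h : ℕ → E → ℝ) (hinf : E → ℝ)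
    (hlip : ∀ n, ∃ K : ℝ, ∀ y ∈ Metric.ball xh r ∩ Ω, ∀ z ∈ Metric.ball xh r ∩ Ω,
      |h n y - h n z| ≤ K * ‖y - z‖)
    (hsub : ∀ n, (∀ u v : E, dini (h n) xh (u + v) ≤ dini (h n) xh u + dini (h n) xh v) ∧
      (∀ u : E, ∀ c : ℝ, 0 ≤ c → dini (h n) xh (c • u) = c * dini (h n) xh u))
    (hlipinf : ∃ K : ℝ, ∀ y ∈ Metric.ball xh r ∩ Ω, ∀ z ∈ Metric.ball xh r ∩ Ω,
      |hinf y - hinf z| ≤ K * ‖y - z‖)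
    (hval : Tendsto (fun n => h n xh) atTop (𝓝 (hinf xh)))
    (hsem : ∀ ε > 0, ∃ N : ℕ, ∀ n ≥ N,
      ∀ y ∈ Metric.ball xh r ∩ Ω, ∀ z ∈ Metric.ball xh r ∩ Ω,
        |(h n y - hinf y) - (h n z - hinf z)| ≤ ε * ‖y - z‖)
    -- there exists `w` with `sup_{n ≥ 1} D⁺ h n (xh)(w) < 0`
    (w : E) (hw : ∃ c < (0 : ℝ), ∀ n ≥ 1, dini (h n) xh w ≤ c)
    -- the multipliers
    (αinf : ℝ) (α : ℕ → ℝ) (hαinf : 0 ≤ αinf) (hα : ∀ n, 0 ≤ α n)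
    (hαsum : Summable α) (hone : αinf + ∑' n, α n = 1)
    (hineq : ∀ u : E, 0 ≤ αinf * dini hinf xh u + ∑' n, α n * dini (h n) xh u) :
    α 0 ≠ 0 :=
  stmt_14_general Ω hΩ xh hxh r hr h hinf hlipinf hsem w hw αinf α hαinf hα hαsum hone hineq
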